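/- arXiv:2204.09746 — 2 statements merged into one kernel-verified Lean document; each statement's English description precedes it below -/
import Mathlib

section
/- Suppose F : ℝ^m × ℝ^n → ℝ is differentiable, the partial gradient ∇_u F(u,v) is L_u-Lipschitz in u and L_uv-Lipschitz in v, and ∇_v F(u,v) is L_v-Lipschitz in v and L_vu-Lipschitz in u, with L_u, L_v > 0. Let χ = max(L_uv, L_vu)/√(L_u·L_v). Then for all u, u', v, v': F(u',v') - F(u,v) ≤ ⟨∇_u F(u,v), u'-u⟩ + ((1+χ)L_u/2)‖u'-u‖² + ⟨∇_v F(u,v), v'-v⟩ + ((1+χ)L_v/2)‖v'-v‖². -/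
/-
Each block is the classical descent lemma once the other block is frozen: moving `v` at `u` and
then `u` at `v'` costs `Lv/2 ‖v' - v‖²` and `Lu/2 ‖u' - u‖²` on top of the linear terms, except that
the second step uses the gradient `∇_u F(u, v')` instead of `∇_u F(u, v)`. The mismatch is at most
`Luv ‖v' - v‖ ‖u' - u‖ ≤ χ √(Lu Lv) ‖u' - u‖ ‖v' - v‖`, and AM-GM splits this into
`χ Lu/2 ‖u' - u‖² + χ Lv/2 ‖v' - v‖²`.
-/

open Set

lemma sub_le_add_half_of_deriv_sub_le_mul {φ φ' : ℝ → ℝ} {K : ℝ}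
    (hφ : ∀ t, HasDerivAt φ (φ' t) t) (hK : ∀ t ∈ Ioo (0 : ℝ) 1, φ' t - φ' 0 ≤ K * t) :
    φ 1 - φ 0 ≤ φ' 0 + K / 2 := by
  set ψ : ℝ → ℝ := fun t => φ t - t * φ' 0 - K / 2 * t ^ 2
  have hψ : ∀ t, HasDerivAt ψ (φ' t - φ' 0 - K * t) t := fun t => by
    have hsq := (hasDerivAt_pow 2 t).const_mul (K / 2)
    refine (((hφ t).sub ((hasDerivAt_id' t).mul_const (φ' 0))).sub hsq).congr_deriv ?_
    norm_num
    ring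
  have hanti : AntitoneOn ψ (Icc 0 1) := by
    refine antitoneOn_of_hasDerivWithinAt_nonpos (convex_Icc 0 1)
      (HasDerivAt.continuousOn fun t _ => hψ t) (fun t _ => (hψ t).hasDerivWithinAt) ?_
    rw [interior_Icc]
    intro t ht
    linarith [hK t ht]
  have := hanti (left_mem_Icc.mpr zero_le_one) (right_mem_Icc.mpr zero_le_one) zero_le_one
  simp only [ψ] at this
  linarith

lemma inner_le_inner_add_norm_sub_mul_norm {E : Type*} [SeminormedAddCommGroup E]
    [InnerProductSpace ℝ E] (a b w : E) :
    (inner ℝ a w : ℝ) ≤ inner ℝ b w + ‖a - b‖ * ‖w‖ := by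
  have h := real_inner_le_norm (a - b) w
  rw [inner_sub_left] at h
  linarith

lemma sub_le_inner_add_of_lipschitz_gradient {E : Type*} [NormedAddCommGroup E]
    [InnerProductSpace ℝ E] [CompleteSpace E] {f : E → ℝ} {g : E → E} {L : ℝ}
    (hg : ∀ x, HasGradientAt f (g x) x) (hlip : ∀ x y, ‖g x - g y‖ ≤ L * ‖x - y‖) (x y : E) :
    f y - f x ≤ (inner ℝ (g x) (y - x) : ℝ) + L / 2 * ‖y - x‖ ^ 2 := by
  set d := y - x
  have hpath : ∀ t : ℝ, HasDerivAt (fun t : ℝ => f (x + t • d)) (inner ℝ (g (x + t • d)) d) t :=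
    fun t => by
      have hline : HasDerivAt (fun t : ℝ => x + t • d) d t := by
        simpa using ((hasDerivAt_id t).smul_const d).const_add x
      have h := (hg (x + t • d)).hasFDerivAt.comp_hasDerivAt t hline
      rwa [InnerProductSpace.toDual_apply_apply] at h
  have hK : ∀ t ∈ Ioo (0 : ℝ) 1,
      (inner ℝ (g (x + t • d)) d : ℝ) - inner ℝ (g (x + (0 : ℝ) • d)) d ≤ L * ‖d‖ ^ 2 * t := by
    intro t ht
    have hinner := inner_le_inner_add_norm_sub_mul_norm (g (x + t • d)) (g x) d
    have hlip_t : ‖g (x + t • d) - g x‖ ≤ L * (t * ‖d‖) := by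
      simpa [norm_smul, abs_of_pos ht.1] using hlip (x + t • d) x
    rw [zero_smul, add_zero]
    nlinarith [norm_nonneg d]
  have h := sub_le_add_half_of_deriv_sub_le_mul hpath hK
  simp only [zero_smul, add_zero, one_smul, d, add_sub_cancel] at h
  linarith

lemma sqrt_mul_mul_mul_le {p q : ℝ} (hp : 0 ≤ p) (hq : 0 ≤ q) (a b : ℝ) :
    √(p * q) * a * b ≤ (p * a ^ 2 + q * b ^ 2) / 2 := by
  rw [Real.sqrt_mul hp]
  nlinarith [sq_nonneg (√p * a - √q * b), Real.sq_sqrt hp, Real.sq_sqrt hq]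

theorem stmt_1_general {m n : ℕ}
    (F : EuclideanSpace ℝ (Fin m) → EuclideanSpace ℝ (Fin n) → ℝ)
    (gu : EuclideanSpace ℝ (Fin m) → EuclideanSpace ℝ (Fin n) → EuclideanSpace ℝ (Fin m))
    (gv : EuclideanSpace ℝ (Fin m) → EuclideanSpace ℝ (Fin n) → EuclideanSpace ℝ (Fin n))
    (Lu Lv Luv Lvu : ℝ) (hLu : 0 < Lu) (hLv : 0 < Lv) (hLuv : 0 ≤ Luv)
    (hgu : ∀ u v, HasGradientAt (fun u' => F u' v) (gu u v) u)
    (hgv : ∀ u v, HasGradientAt (fun v' => F u v') (gv u v) v)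
    (huu : ∀ u u' v, ‖gu u v - gu u' v‖ ≤ Lu * ‖u - u'‖)
    (huv : ∀ u v v', ‖gu u v - gu u v'‖ ≤ Luv * ‖v - v'‖)
    (hvv : ∀ u v v', ‖gv u v - gv u v'‖ ≤ Lv * ‖v - v'‖)
    (χ : ℝ) (hχ : χ = max Luv Lvu / Real.sqrt (Lu * Lv)) :
    ∀ u u' v v',
      F u' v' - F u v ≤
        (inner ℝ (gu u v) (u' - u) : ℝ) + (1 + χ) * Lu / 2 * ‖u' - u‖ ^ 2 +
          (inner ℝ (gv u v) (v' - v) : ℝ) + (1 + χ) * Lv / 2 * ‖v' - v‖ ^ 2 := by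
  intro u u' v v'
  have hs : 0 < √(Lu * Lv) := Real.sqrt_pos.mpr (mul_pos hLu hLv)
  have hχ_nonneg : 0 ≤ χ := hχ ▸ div_nonneg (hLuv.trans (le_max_left _ _)) hs.le
  have hLuv_le : Luv ≤ χ * √(Lu * Lv) := by
    rw [hχ, div_mul_cancel₀ _ hs.ne']
    exact le_max_left _ _
  have hv := sub_le_inner_add_of_lipschitz_gradient (hgv u) (hvv u) v v'
  have hu := sub_le_inner_add_of_lipschitz_gradient (fun w => hgu w v') (fun a b => huu a b v') u u'
  have hmismatch := inner_le_inner_add_norm_sub_mul_norm (gu u v') (gu u v) (u' - u)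
  have hcross : ‖gu u v' - gu u v‖ * ‖u' - u‖ ≤ χ * ((Lu * ‖u' - u‖ ^ 2 + Lv * ‖v' - v‖ ^ 2) / 2) :=
    calc ‖gu u v' - gu u v‖ * ‖u' - u‖ ≤ χ * √(Lu * Lv) * ‖u' - u‖ * ‖v' - v‖ := by
          rw [mul_right_comm]
          gcongr
          exact (huv u v' v).trans (by gcongr)
      _ ≤ χ * ((Lu * ‖u' - u‖ ^ 2 + Lv * ‖v' - v‖ ^ 2) / 2) := by
          simp only [mul_assoc]
          gcongr
          simpa only [mul_assoc] using sqrt_mul_mul_mul_le hLu.le hLv.le ‖u' - u‖ ‖v' - v‖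
  linarith

/-- Lemma 1 (smoothness decomposition) of the PMA-FL convergence analysis. -/
theorem stmt_1 {m n : ℕ}
    (F : EuclideanSpace ℝ (Fin m) → EuclideanSpace ℝ (Fin n) → ℝ)
    (gu : EuclideanSpace ℝ (Fin m) → EuclideanSpace ℝ (Fin n) → EuclideanSpace ℝ (Fin m))
    (gv : EuclideanSpace ℝ (Fin m) → EuclideanSpace ℝ (Fin n) → EuclideanSpace ℝ (Fin n))
    (Lu Lv Luv Lvu : ℝ) (hLu : 0 < Lu) (hLv : 0 < Lv) (hLuv : 0 ≤ Luv) (hLvu : 0 ≤ Lvu)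
    (hgu : ∀ u v, HasGradientAt (fun u' => F u' v) (gu u v) u)
    (hgv : ∀ u v, HasGradientAt (fun v' => F u v') (gv u v) v)
    (huu : ∀ u u' v, ‖gu u v - gu u' v‖ ≤ Lu * ‖u - u'‖)
    (huv : ∀ u v v', ‖gu u v - gu u v'‖ ≤ Luv * ‖v - v'‖)
    (hvv : ∀ u v v', ‖gv u v - gv u v'‖ ≤ Lv * ‖v - v'‖)
    (hvu : ∀ u u' v, ‖gv u v - gv u' v‖ ≤ Lvu * ‖u - u'‖)
    (χ : ℝ) (hχ : χ = max Luv Lvu / Real.sqrt (Lu * Lv)) :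
    ∀ u u' v v',
      F u' v' - F u v ≤
        (inner ℝ (gu u v) (u' - u) : ℝ) + (1 + χ) * Lu / 2 * ‖u' - u‖ ^ 2 +
          (inner ℝ (gv u v) (v' - v) : ℝ) + (1 + χ) * Lv / 2 * ‖v' - v‖ ^ 2 :=
  stmt_1_general F gu gv Lu Lv Luv Lvu hLu hLv hLuv hgu hgv huu huv hvv χ hχ
end

section
/- The function f(T) = T·(2^{Q/T} − 1) is convex and non-increasing on (0, ∞) for any constant Q > 0. -/
/-!
Writing `2 ^ (Q / T) = exp (c / T)` with `c = Q log 2`, the function is `g T = T (exp (c / T) - 1)`.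
Its derivative is `exp u (1 - u) - 1` with `u = c / T`, which is `≤ 0` because `1 - u ≤ exp (-u)`,
and its second derivative is `exp (c / T) c² / T³ ≥ 0` for `T > 0`.
-/

open Real Set

lemma exp_mul_one_sub_le_one (u : ℝ) : exp u * (1 - u) ≤ 1 := by
  calc exp u * (1 - u) ≤ exp u * exp (-u) := by gcongr; exact one_sub_le_exp_neg u
    _ = 1 := by rw [← exp_add, add_neg_cancel, exp_zero]

lemma hasDerivAt_const_div (c : ℝ) {x : ℝ} (hx : x ≠ 0) :
    HasDerivAt (fun T : ℝ => c / T) (-(c / x ^ 2)) x := by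
  simpa [div_eq_mul_inv, mul_comm, mul_assoc, neg_mul, mul_neg] using
    (hasDerivAt_inv hx).const_mul c

lemma hasDerivAt_mul_exp_div_sub_one (c : ℝ) {x : ℝ} (hx : x ≠ 0) :
    HasDerivAt (fun T : ℝ => T * (exp (c / T) - 1)) (exp (c / x) * (1 - c / x) - 1) x := by
  refine ((hasDerivAt_id x).mul ((hasDerivAt_const_div c hx).exp.sub_const 1)).congr_deriv ?_
  simp only [id]
  field_simp
  ring

lemma hasDerivAt_exp_div_mul_one_sub_div (c : ℝ) {x : ℝ} (hx : x ≠ 0) :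
    HasDerivAt (fun T : ℝ => exp (c / T) * (1 - c / T) - 1) (exp (c / x) * (c ^ 2 / x ^ 3)) x := by
  have hc := hasDerivAt_const_div c hx
  refine ((hc.exp.mul (hc.const_sub 1)).sub_const 1).congr_deriv ?_
  field_simp
  ring

lemma continuousOn_mul_exp_div_sub_one (c : ℝ) :
    ContinuousOn (fun T : ℝ => T * (exp (c / T) - 1)) (Ioi 0) :=
  fun _ hx => (hasDerivAt_mul_exp_div_sub_one c (ne_of_gt hx)).continuousAt.continuousWithinAt

lemma convexOn_mul_exp_div_sub_one (c : ℝ) :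
    ConvexOn ℝ (Ioi 0) (fun T : ℝ => T * (exp (c / T) - 1)) := by
  refine convexOn_of_hasDerivWithinAt2_nonneg (convex_Ioi 0) (continuousOn_mul_exp_div_sub_one c)
    (f' := fun x => exp (c / x) * (1 - c / x) - 1) (f'' := fun x => exp (c / x) * (c ^ 2 / x ^ 3))
    ?_ ?_ ?_ <;> rw [interior_Ioi] <;> intro x (hx : 0 < x)
  · exact (hasDerivAt_mul_exp_div_sub_one c hx.ne').hasDerivWithinAt
  · exact (hasDerivAt_exp_div_mul_one_sub_div c hx.ne').hasDerivWithinAt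
  · positivity

lemma antitoneOn_mul_exp_div_sub_one (c : ℝ) :
    AntitoneOn (fun T : ℝ => T * (exp (c / T) - 1)) (Ioi 0) := by
  refine antitoneOn_of_hasDerivWithinAt_nonpos (convex_Ioi 0) (continuousOn_mul_exp_div_sub_one c)
    (f' := fun x => exp (c / x) * (1 - c / x) - 1) ?_ ?_ <;> rw [interior_Ioi] <;> intro x hx
  · exact (hasDerivAt_mul_exp_div_sub_one c (ne_of_gt hx)).hasDerivWithinAt
  · exact sub_nonpos.mpr (exp_mul_one_sub_le_one _)

theorem stmt_8_general (Q : ℝ) :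
    ConvexOn ℝ (Set.Ioi (0 : ℝ)) (fun T => T * ((2 : ℝ) ^ (Q / T) - 1)) ∧
      AntitoneOn (fun T => T * ((2 : ℝ) ^ (Q / T) - 1)) (Set.Ioi (0 : ℝ)) := by
  have h_exp : (fun T : ℝ => T * ((2 : ℝ) ^ (Q / T) - 1)) = fun T => T * (exp (log 2 * Q / T) - 1) := by
    funext T
    rw [rpow_def_of_pos two_pos, mul_div_assoc]
  rw [h_exp]
  exact ⟨convexOn_mul_exp_div_sub_one _, antitoneOn_mul_exp_div_sub_one _⟩

/-- The uplink-energy profile `T ↦ T (2^{Q/T} − 1)` is convex and non-increasing on `(0, ∞)`. -/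
theorem stmt_8 (Q : ℝ) (hQ : 0 < Q) :
    ConvexOn ℝ (Set.Ioi (0 : ℝ)) (fun T => T * ((2 : ℝ) ^ (Q / T) - 1)) ∧
      AntitoneOn (fun T => T * ((2 : ℝ) ^ (Q / T) - 1)) (Set.Ioi (0 : ℝ)) :=
  stmt_8_general Q
end
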